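/- arXiv:2104.14602 — 2 statements merged into one kernel-verified Lean document; each statement's English description precedes it below -/
import Mathlib

section
/- Let S be a type, and let D₁ and D₂ be domain models over S given by families R₁ : O₁ → Set (S × S) and R₂ : O₂ → Set (S × S). Then Γ(D₁) ⊆ Γ(D₂) if and only if for every operator o' ∈ O₁ and every transition t ∈ R₁(o') there exists a nonempty finite sequence seq of operators from O₂ such that t ∈ Γ(seq). (Transition-wise version of Theorem 1.) -/
/-- Relational composition: `A ; B`. -/
def comp {S : Type*} (A B : Set (S × S)) : Set (S × S) :=
  {p | ∃ t, (p.1, t) ∈ A ∧ (t, p.2) ∈ B}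

/-- Reach set of a nonempty finite sequence of operators, represented as
a head operator together with the list of remaining operators. -/
def seqReach {S O : Type*} (R : O → Set (S × S)) : O → List O → Set (S × S)
  | o, [] => R o
  | o, o' :: rest => comp (R o) (seqReach R o' rest)

/-- Reach set of a domain model: union over all nonempty finite sequences of operators. -/
def domReach {S O : Type*} (R : O → Set (S × S)) : Set (S × S) :=
  ⋃ (o : O), ⋃ (l : List O), seqReach R o l

lemma seqReach_append {S O : Type*} (R : O → Set (S × S)) (o : O) (l : List O)
    (o' : O) (l' : List O) :
    seqReach R o (l ++ o' :: l') = comp (seqReach R o l) (seqReach R o' l') := by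
  induction l generalizing o with
  | nil => rfl
  | cons a tl ih =>
    show comp (R o) (seqReach R a (tl ++ o' :: l')) = _
    rw [ih]
    ext ⟨s, u⟩
    constructor
    · rintro ⟨t, ht, v, hv1, hv2⟩
      exact ⟨v, ⟨t, ht, hv1⟩, hv2⟩
    · rintro ⟨v, ⟨t, ht, hv1⟩, hv2⟩
      exact ⟨t, ht, v, hv1, hv2⟩

/-- Transition-wise version of Theorem 1. -/
theorem stmt_2 {S O₁ O₂ : Type*} (R₁ : O₁ → Set (S × S)) (R₂ : O₂ → Set (S × S)) :
    domReach R₁ ⊆ domReach R₂ ↔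
      ∀ o' : O₁, ∀ t ∈ R₁ o', ∃ (o : O₂) (l : List O₂), t ∈ seqReach R₂ o l := by
  constructor
  · intro h o' t ht
    have : t ∈ domReach R₁ := Set.mem_iUnion.2 ⟨o', Set.mem_iUnion.2 ⟨[], ht⟩⟩
    have := h this
    simpa [domReach, Set.mem_iUnion] using this
  · intro h t ht
    simp only [domReach, Set.mem_iUnion] at ht
    obtain ⟨o, l, ht⟩ := ht
    induction l generalizing o t with
    | nil =>
      obtain ⟨o₂, l₂, h2⟩ := h o t ht
      exact Set.mem_iUnion.2 ⟨o₂, Set.mem_iUnion.2 ⟨l₂, h2⟩⟩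
    | cons a tl ih =>
      obtain ⟨s, hs1, hs2⟩ := ht
      obtain ⟨o₂, l₂, h2⟩ := h o (t.1, s) hs1
      have h3 := ih a hs2
      simp only [domReach, Set.mem_iUnion] at h3
      obtain ⟨o₃, l₃, h3⟩ := h3
      refine Set.mem_iUnion.2 ⟨o₂, Set.mem_iUnion.2 ⟨l₂ ++ o₃ :: l₃, ?_⟩⟩
      rw [seqReach_append]
      exact ⟨s, h2, h3⟩
end

section
/- Let S be a type, and let D₁ and D₂ be domain models over S given by families R₁ : O₁ → Set (S × S) and R₂ : O₂ → Set (S × S). If for every operator o ∈ O₁ there exists a nonempty finite sequence of operators from O₂ whose reach set contains R₁(o), and for every operator o ∈ O₂ there exists a nonempty finite sequence of operators from O₁ whose reach set contains R₂(o), then Γ(D₁) = Γ(D₂). -/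
lemma seqReach_mem_domReach {S O : Type*} (R : O → Set (S × S)) (o : O) (l : List O) :
    seqReach R o l ⊆ domReach R := fun p hp =>
  Set.mem_iUnion.2 ⟨o, Set.mem_iUnion.2 ⟨l, hp⟩⟩

lemma domReach_trans {S O : Type*} (R : O → Set (S × S)) {a b c : S}
    (h1 : (a, b) ∈ domReach R) (h2 : (b, c) ∈ domReach R) : (a, c) ∈ domReach R := by
  obtain ⟨o, l, h1⟩ := by simpa [domReach, Set.mem_iUnion] using h1
  obtain ⟨o', l', h2⟩ := by simpa [domReach, Set.mem_iUnion] using h2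
  exact seqReach_mem_domReach R o (l ++ o' :: l')
    (by rw [seqReach_append]; exact ⟨b, h1, h2⟩)

lemma domReach_sub {S O₁ O₂ : Type*} (R₁ : O₁ → Set (S × S)) (R₂ : O₂ → Set (S × S))
    (h₁ : ∀ o : O₁, ∃ (o' : O₂) (l : List O₂), R₁ o ⊆ seqReach R₂ o' l) :
    domReach R₁ ⊆ domReach R₂ := by
  have key : ∀ (l : List O₁) (o : O₁), seqReach R₁ o l ⊆ domReach R₂ := by
    intro l
    induction l with
    | nil =>
      intro o p hp
      obtain ⟨o', l', hs⟩ := h₁ o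
      exact seqReach_mem_domReach R₂ o' l' (hs hp)
    | cons a rest ih =>
      rintro o ⟨s, u⟩ ⟨t, ht, h2⟩
      obtain ⟨o', l', hs⟩ := h₁ o
      exact domReach_trans R₂ (seqReach_mem_domReach R₂ o' l' (hs ht)) (ih a h2)
  intro p hp
  obtain ⟨o, l, hp⟩ := by simpa [domReach, Set.mem_iUnion] using hp
  exact key l o hp

/-- If every operator of each domain has a nonempty sequence from the other domain
whose reach set contains its reach set, then the two domain models have equal reach
sets. -/
theorem stmt_7 {S O₁ O₂ : Type*} (R₁ : O₁ → Set (S × S)) (R₂ : O₂ → Set (S × S))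
    (h₁ : ∀ o : O₁, ∃ (o' : O₂) (l : List O₂), R₁ o ⊆ seqReach R₂ o' l)
    (h₂ : ∀ o : O₂, ∃ (o' : O₁) (l : List O₁), R₂ o ⊆ seqReach R₁ o' l) :
    domReach R₁ = domReach R₂ :=
  Set.Subset.antisymm (domReach_sub R₁ R₂ h₁) (domReach_sub R₂ R₁ h₂)
end
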